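/- arXiv:2512.14987 — 2 statements merged into one kernel-verified Lean document; each statement's English description precedes it below -/
import Mathlib

section
/- Suppose (s,t) ∈ ℝ₊ × ℝ₊ solves the system s = (M(s,t)·binom(N,k)/λ)^{−1/k}·‖U_{R,x₀}‖_{L^p(B_R(x₀))} and t = (M(s,t)·binom(N,k)/λ)^{−1/k}·‖∇U_{R,x₀}‖_{L^q(B_R(x₀))}. Then the function u(x) = s·U_{R,x₀}(x)/‖U_{R,x₀}‖_{L^p(B_R(x₀))} satisfies M(‖u‖_{L^p}, ‖∇u‖_{L^q})·S_k(D²u) = λ in B_R(x₀), u = 0 on the boundary, and ∂u/∂ν is a positive constant on the boundary. -/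
open MeasureTheory Metric
open scoped ENNReal

/-- The Hessian matrix of `u` at `x`. -/
noncomputable def hess {N : ℕ} (u : EuclideanSpace ℝ (Fin N) → ℝ)
    (x : EuclideanSpace ℝ (Fin N)) : Matrix (Fin N) (Fin N) ℝ :=
  fun i j => fderiv ℝ (fun y => fderiv ℝ u y (EuclideanSpace.single i 1)) x
    (EuclideanSpace.single j 1)

/-- The k-th elementary symmetric function of the eigenvalues of a matrix, via the
characteristic polynomial. -/
noncomputable def Sk {N : ℕ} (k : ℕ) (A : Matrix (Fin N) (Fin N) ℝ) : ℝ :=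
  (-1) ^ k * (Matrix.charpoly A).coeff (N - k)

/-!
Everything reduces to scaling: `u = c • U` with `c = s / A`, and the first equation of the
system says exactly that `c = (M(s,t) binom(N,k) / λ)^(-1/k)`. Hence `‖u‖_p = c A = s` and
`‖∇u‖_q = c B = t`, so `M` is evaluated at `(s, t)`, while `D²u = c I` gives
`S_k(D²u) = binom(N,k) c^k = λ / M(s,t)`. On the sphere `U = 0` and `∇u · ν = c R`.
-/

open Polynomial in
theorem Sk_smul_one {N : ℕ} (k : ℕ) (hkN : k ≤ N) (c : ℝ) :
    Sk k (c • (1 : Matrix (Fin N) (Fin N) ℝ)) = (N.choose k : ℝ) * c ^ k := by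
  have hcharpoly : (c • (1 : Matrix (Fin N) (Fin N) ℝ)).charpoly = (X - C c) ^ N := by
    rw [Matrix.smul_one_eq_diagonal, Matrix.charpoly_diagonal, Finset.prod_const,
      Finset.card_univ, Fintype.card_fin]
  rw [Sk, hcharpoly, sub_eq_add_neg, ← C_neg, coeff_X_add_C_pow,
    Nat.sub_sub_self hkN, Nat.choose_symm hkN, ← mul_assoc, ← mul_pow, neg_one_mul, neg_neg,
    mul_comm]

theorem hasFDerivAt_half_norm_sub_sq_sub {E : Type*} [NormedAddCommGroup E]
    [InnerProductSpace ℝ E] (x₀ : E) (r : ℝ) (x : E) :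
    HasFDerivAt (fun y => (‖y - x₀‖ ^ 2 - r ^ 2) / 2) (innerSL ℝ (x - x₀)) x := by
  simp only [div_eq_mul_inv]
  refine (((hasFDerivAt_id x).sub_const x₀).norm_sq.sub_const (r ^ 2)).mul_const (2⁻¹ : ℝ)
    |>.congr_fderiv ?_
  ext v
  simp

theorem hess_eq_smul_one {N : ℕ} {u : EuclideanSpace ℝ (Fin N) → ℝ} {c : ℝ}
    {x₀ : EuclideanSpace ℝ (Fin N)} (hu : ∀ y, fderiv ℝ u y = c • innerSL ℝ (y - x₀))
    (x : EuclideanSpace ℝ (Fin N)) :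
    hess u x = c • (1 : Matrix (Fin N) (Fin N) ℝ) := by
  ext i j
  have hpartial : (fun y => fderiv ℝ u y (EuclideanSpace.single i 1))
      = fun y => c * innerSL ℝ (EuclideanSpace.single i (1 : ℝ)) (y - x₀) := by
    funext y
    rw [hu y, smul_apply, innerSL_apply_apply, innerSL_apply_apply,
      real_inner_comm, smul_eq_mul]
  have hderiv : HasFDerivAt (fun y => c * innerSL ℝ (EuclideanSpace.single i (1 : ℝ)) (y - x₀))
      (c • innerSL ℝ (EuclideanSpace.single i (1 : ℝ))) x :=
    (((innerSL ℝ _).hasFDerivAt.comp x ((hasFDerivAt_id x).sub_const x₀))).const_mul c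
  rw [hess, hpartial, hderiv.fderiv]
  by_cases h : i = j <;> simp [h, EuclideanSpace.inner_single_left]

theorem toReal_eLpNorm_const_smul_of_nonneg {α F : Type*} [MeasurableSpace α]
    [NormedAddCommGroup F] [NormedSpace ℝ F] {c : ℝ} (hc : 0 ≤ c) (f : α → F) (p : ℝ≥0∞)
    (μ : Measure α) :
    (eLpNorm (c • f) p μ).toReal = c * (eLpNorm f p μ).toReal := by
  rw [eLpNorm_const_smul, ENNReal.toReal_mul, toReal_enorm, Real.norm_of_nonneg hc]

theorem rpow_neg_one_div_natCast_pow {w : ℝ} (hw : 0 ≤ w) {k : ℕ} (hk : k ≠ 0) :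
    (w ^ (-(1 : ℝ) / k)) ^ k = w⁻¹ := by
  rw [neg_div, one_div, Real.rpow_neg hw, inv_pow, Real.rpow_inv_natCast_pow hw hk]

theorem stmt_3_general {N : ℕ} (k : ℕ) (hk : 1 ≤ k) (hkN : k ≤ N)
    (R : ℝ) (hR : 0 < R) (x₀ : EuclideanSpace ℝ (Fin N))
    (p q : ℝ≥0∞) (lam : ℝ) (hlam : 0 < lam)
    (M : ℝ → ℝ → ℝ) (hM : ∀ s t : ℝ, 0 < M s t)
    (U : EuclideanSpace ℝ (Fin N) → ℝ) (hU : ∀ x, U x = (‖x - x₀‖ ^ 2 - R ^ 2) / 2)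
    -- the L^p norm of U and the L^q norm of |∇U| over the ball
    (A B : ℝ)
    (hA : A = (eLpNorm U p (volume.restrict (Metric.ball x₀ R))).toReal)
    (hB : B = (eLpNorm (fun y => ‖fderiv ℝ U y‖) q
        (volume.restrict (Metric.ball x₀ R))).toReal)
    -- (s, t) solves the system
    (s t : ℝ) (hs : 0 < s)
    (hsys1 : s = (M s t * (N.choose k : ℝ) / lam) ^ (-(1 : ℝ) / k) * A)
    (hsys2 : t = (M s t * (N.choose k : ℝ) / lam) ^ (-(1 : ℝ) / k) * B)
    (u : EuclideanSpace ℝ (Fin N) → ℝ) (hu : ∀ x, u x = s * U x / A) :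
    (∀ x ∈ Metric.ball x₀ R,
      M (eLpNorm u p (volume.restrict (Metric.ball x₀ R))).toReal
        (eLpNorm (fun y => ‖fderiv ℝ u y‖) q (volume.restrict (Metric.ball x₀ R))).toReal
        * Sk k (hess u x) = lam) ∧
    (∀ x ∈ Metric.sphere x₀ R, u x = 0) ∧
    (∃ c : ℝ, 0 < c ∧ ∀ x ∈ Metric.sphere x₀ R, fderiv ℝ u x (R⁻¹ • (x - x₀)) = c) := by
  have hchoose : (0 : ℝ) < N.choose k := mod_cast Nat.choose_pos hkN
  have hMst := hM s t
  set w := M s t * (N.choose k : ℝ) / lam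
  have hw : 0 < w := by positivity
  set c := w ^ (-(1 : ℝ) / k)
  have hc : 0 < c := Real.rpow_pos_of_pos hw _
  have hA0 : 0 < A := pos_of_mul_pos_right (hsys1 ▸ hs) hc.le
  have hu_smul : u = c • U := by
    funext y
    rw [hu y, hsys1, Pi.smul_apply, smul_eq_mul]
    field_simp
  have hDU : ∀ y, HasFDerivAt U (innerSL ℝ (y - x₀)) y := fun y =>
    funext hU ▸ hasFDerivAt_half_norm_sub_sq_sub x₀ R y
  have hDu : ∀ y, fderiv ℝ u y = c • innerSL ℝ (y - x₀) := fun y =>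
    hu_smul ▸ ((hDU y).const_smul c).fderiv
  have hnorm_u : (eLpNorm u p (volume.restrict (ball x₀ R))).toReal = s := by
    rw [hu_smul, toReal_eLpNorm_const_smul_of_nonneg hc.le, ← hA, hsys1]
  have hnorm_Du : (eLpNorm (fun y => ‖fderiv ℝ u y‖) q (volume.restrict (ball x₀ R))).toReal
      = t := by
    have : (fun y => ‖fderiv ℝ u y‖) = c • fun y => ‖fderiv ℝ U y‖ := by
      funext y
      simp [hDu, (hDU y).fderiv, norm_smul, hc.le]
    rw [this, toReal_eLpNorm_const_smul_of_nonneg hc.le, ← hB, hsys2]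
  refine ⟨fun x _ => ?_, fun x hx => ?_, ⟨c * R, by positivity, fun x hx => ?_⟩⟩
  · rw [hnorm_u, hnorm_Du, hess_eq_smul_one hDu, Sk_smul_one k hkN,
      rpow_neg_one_div_natCast_pow hw.le (by omega)]
    simp only [w]
    field_simp
  · rw [hu_smul, Pi.smul_apply, hU, mem_sphere_iff_norm.mp hx]
    simp
  · rw [hDu, smul_apply, innerSL_apply_apply, real_inner_smul_right,
      real_inner_self_eq_norm_sq, mem_sphere_iff_norm.mp hx, smul_eq_mul]
    field_simp

theorem stmt_3 {N : ℕ} (hN : 1 ≤ N) (k : ℕ) (hk : 1 ≤ k) (hkN : k ≤ N)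
    (R : ℝ) (hR : 0 < R) (x₀ : EuclideanSpace ℝ (Fin N))
    (p q : ℝ≥0∞) (hp : 0 < p) (hq : 0 < q) (lam : ℝ) (hlam : 0 < lam)
    (M : ℝ → ℝ → ℝ) (hM : ∀ s t : ℝ, 0 < M s t)
    (U : EuclideanSpace ℝ (Fin N) → ℝ) (hU : ∀ x, U x = (‖x - x₀‖ ^ 2 - R ^ 2) / 2)
    -- the L^p norm of U and the L^q norm of |∇U| over the ball
    (A B : ℝ)
    (hA : A = (eLpNorm U p (volume.restrict (Metric.ball x₀ R))).toReal)
    (hB : B = (eLpNorm (fun y => ‖fderiv ℝ U y‖) q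
        (volume.restrict (Metric.ball x₀ R))).toReal)
    -- (s, t) solves the system
    (s t : ℝ) (hs : 0 < s) (ht : 0 < t)
    (hsys1 : s = (M s t * (N.choose k : ℝ) / lam) ^ (-(1 : ℝ) / k) * A)
    (hsys2 : t = (M s t * (N.choose k : ℝ) / lam) ^ (-(1 : ℝ) / k) * B)
    (u : EuclideanSpace ℝ (Fin N) → ℝ) (hu : ∀ x, u x = s * U x / A) :
    (∀ x ∈ Metric.ball x₀ R,
      M (eLpNorm u p (volume.restrict (Metric.ball x₀ R))).toReal
        (eLpNorm (fun y => ‖fderiv ℝ u y‖) q (volume.restrict (Metric.ball x₀ R))).toReal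
        * Sk k (hess u x) = lam) ∧
    (∀ x ∈ Metric.sphere x₀ R, u x = 0) ∧
    (∃ c : ℝ, 0 < c ∧ ∀ x ∈ Metric.sphere x₀ R, fderiv ℝ u x (R⁻¹ • (x - x₀)) = c) :=
  stmt_3_general k hk hkN R hR x₀ p q lam hlam M hM U hU A B hA hB s t hs hsys1 hsys2 u hu
end

section
/- For N ≥ 2, the function U(x) = (|x|^{−N} − |x|^{2−N})/2 is the unique C² solution on {|x| ≥ 1} of the exterior overdetermined problem Δu = N|x|^{−N−2} in {|x| > 1}, u = 0 and |∇u| = c|x|^{−N} on {|x| = 1} for some constant c > 0, with u(x) → 0 as |x| → ∞ if N ≥ 3 (u bounded if N = 2); moreover necessarily c = 1. -/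
/-!
The difference `v = u - U` between `u` and the explicit solution `U` is harmonic outside the unit
ball, vanishes on the unit sphere and tends to `0` at infinity (is bounded if `N = 2`). The weak
maximum principle on the annuli `1 ≤ ‖x‖ ≤ R`, applied to `±v` with `R → ∞`, forces `v = 0`; in
the plane one first subtracts the harmonic barrier `(sup v / log R) · log ‖x‖`. Hence `u = U` on
`‖x‖ ≥ 1`, so the two functions agree on a half-space touching the unit sphere and have the same
gradient `-x` there; this gives `c = 1`.
-/

open Filter

/-- The Laplacian of `u` at `x`, as the sum of the pure second partial derivatives. -/
noncomputable def lap {N : ℕ} (u : EuclideanSpace ℝ (Fin N) → ℝ)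
    (x : EuclideanSpace ℝ (Fin N)) : ℝ :=
  ∑ i : Fin N, fderiv ℝ (fun y => fderiv ℝ u y (EuclideanSpace.single i 1)) x
    (EuclideanSpace.single i 1)

open Topology

theorem IsLocalMax.deriv_deriv_nonpos {g : ℝ → ℝ} {a : ℝ} (hmax : IsLocalMax g a)
    (hg : ContinuousAt g a) : deriv (deriv g) a ≤ 0 := by
  by_contra! hpos
  -- the second derivative test would make `a` a local minimum too, so `g` is locally constant
  have hmin : IsLocalMin g a := isLocalMin_of_deriv_deriv_pos hpos hmax.deriv_eq_zero hg
  have hconst : g =ᶠ[𝓝 a] fun _ => g a := by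
    filter_upwards [hmax, hmin] with t h₁ h₂ using le_antisymm h₁ h₂
  have hzero : deriv (deriv g) a = 0 := by
    rw [hconst.deriv.deriv_eq]
    simp
  exact hpos.ne' hzero

section ContDiffTwo

variable {E F : Type*} [NormedAddCommGroup E] [NormedSpace ℝ E] [NormedAddCommGroup F]
  [NormedSpace ℝ F] {u : E → F} {x : E}

theorem ContDiffAt.eventually_differentiableAt (hu : ContDiffAt ℝ 2 u x) :
    ∀ᶠ y in 𝓝 x, DifferentiableAt ℝ u y :=
  (hu.eventually (by simp)).mono fun _ hy => hy.differentiableAt (by norm_num)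

theorem ContDiffAt.differentiableAt_fderiv_apply (hu : ContDiffAt ℝ 2 u x) (e : E) :
    DifferentiableAt ℝ (fun y => fderiv ℝ u y e) x :=
  ((hu.fderiv_right (m := 1) (by norm_num)).differentiableAt (by norm_num)).clm_apply
    (differentiableAt_const e)

end ContDiffTwo

section Laplacian

variable {N : ℕ} {u v : EuclideanSpace ℝ (Fin N) → ℝ} {x : EuclideanSpace ℝ (Fin N)}

theorem lap_nonpos_of_isLocalMax (hu : ContDiffAt ℝ 2 u x) (hmax : IsLocalMax u x) :
    lap u x ≤ 0 := by
  refine Finset.sum_nonpos fun i _ => ?_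
  set e : EuclideanSpace ℝ (Fin N) := EuclideanSpace.single i 1
  set line : ℝ → EuclideanSpace ℝ (Fin N) := fun t => x + t • e
  have hline : ∀ t, HasDerivAt line e t := fun t =>
    (((hasDerivAt_id t).smul_const e).const_add x).congr_deriv (one_smul ℝ e)
  have hline0 : line 0 = x := by simp [line]
  have hline_tendsto : Tendsto line (𝓝 0) (𝓝 x) := hline0 ▸ (hline 0).continuousAt.tendsto
  have hderiv : deriv (u ∘ line) =ᶠ[𝓝 0] fun t => fderiv ℝ u (line t) e := by
    filter_upwards [hline_tendsto.eventually hu.eventually_differentiableAt] with t ht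
    exact (ht.hasFDerivAt.comp_hasDerivAt t (hline t)).deriv
  have hsecond : deriv (deriv (u ∘ line)) 0 = fderiv ℝ (fun y => fderiv ℝ u y e) x e := by
    rw [hderiv.deriv_eq]
    have hfd : HasFDerivAt (fun y => fderiv ℝ u y e) (fderiv ℝ (fun y => fderiv ℝ u y e) x)
        (line 0) := hline0 ▸ (hu.differentiableAt_fderiv_apply e).hasFDerivAt
    exact (hfd.comp_hasDerivAt 0 (hline 0)).deriv
  rw [← hsecond]
  refine IsLocalMax.deriv_deriv_nonpos ?_ (hu.continuousAt.comp_of_eq (hline 0).continuousAt hline0)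
  exact (hline0 ▸ hmax).comp_continuous (hline 0).continuousAt

theorem lap_add (hu : ContDiffAt ℝ 2 u x) (hv : ContDiffAt ℝ 2 v x) :
    lap (fun y => u y + v y) x = lap u x + lap v x := by
  rw [lap, lap, lap, ← Finset.sum_add_distrib]
  refine Finset.sum_congr rfl fun i _ => ?_
  set e : EuclideanSpace ℝ (Fin N) := EuclideanSpace.single i 1
  have h : (fun y => fderiv ℝ (fun z => u z + v z) y e)
      =ᶠ[𝓝 x] fun y => fderiv ℝ u y e + fderiv ℝ v y e := by
    filter_upwards [hu.eventually_differentiableAt, hv.eventually_differentiableAt] with y hu' hv'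
    rw [fderiv_fun_add hu' hv']
    rfl
  rw [h.fderiv_eq, fderiv_fun_add (hu.differentiableAt_fderiv_apply e)
    (hv.differentiableAt_fderiv_apply e)]
  rfl

theorem lap_const_mul (a : ℝ) (hu : ContDiffAt ℝ 2 u x) :
    lap (fun y => a * u y) x = a * lap u x := by
  rw [lap, lap, Finset.mul_sum]
  refine Finset.sum_congr rfl fun i _ => ?_
  set e : EuclideanSpace ℝ (Fin N) := EuclideanSpace.single i 1
  have h : (fun y => fderiv ℝ (fun z => a * u z) y e) =ᶠ[𝓝 x] fun y => a * fderiv ℝ u y e := by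
    filter_upwards [hu.eventually_differentiableAt] with y hu'
    rw [fderiv_const_mul hu' a]
    rfl
  rw [h.fderiv_eq, fderiv_const_mul (hu.differentiableAt_fderiv_apply e) a]
  rfl

theorem lap_neg (hu : ContDiffAt ℝ 2 u x) : lap (fun y => -u y) x = -lap u x := by
  simpa using lap_const_mul (-1) hu

theorem lap_sub (hu : ContDiffAt ℝ 2 u x) (hv : ContDiffAt ℝ 2 v x) :
    lap (fun y => u y - v y) x = lap u x - lap v x := by
  simpa [sub_eq_add_neg, lap_neg hv] using lap_add hu hv.neg

end Laplacian

section Radial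

theorem hasFDerivAt_comp_norm_sq {E : Type*} [NormedAddCommGroup E] [InnerProductSpace ℝ E]
    {φ : ℝ → ℝ} {φ' : ℝ} {y : E} (hφ : HasDerivAt φ φ' (‖y‖ ^ 2)) :
    HasFDerivAt (fun x => φ (‖x‖ ^ 2)) ((2 * φ') • innerSL ℝ y) y := by
  refine (hφ.comp_hasFDerivAt y (hasStrictFDerivAt_norm_sq y).hasFDerivAt).congr_fderiv ?_
  ext v
  simp only [smul_apply, smul_eq_mul, two_nsmul, add_apply]
  ring

variable {N : ℕ}

theorem lap_comp_norm_sq {φ φ' : ℝ → ℝ} {φ'' : ℝ} {y : EuclideanSpace ℝ (Fin N)}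
    (hφ : ∀ᶠ s in 𝓝 (‖y‖ ^ 2), HasDerivAt φ (φ' s) s) (hφ' : HasDerivAt φ' φ'' (‖y‖ ^ 2)) :
    lap (fun x => φ (‖x‖ ^ 2)) y = 4 * φ'' * ‖y‖ ^ 2 + 2 * N * φ' (‖y‖ ^ 2) := by
  have hnorm_sq : Continuous fun x : EuclideanSpace ℝ (Fin N) => ‖x‖ ^ 2 := by fun_prop
  have hpartial : ∀ i : Fin N, fderiv ℝ (fun z => fderiv ℝ (fun x => φ (‖x‖ ^ 2)) z
      (EuclideanSpace.single i 1)) y (EuclideanSpace.single i 1)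
      = 4 * φ'' * y i ^ 2 + 2 * φ' (‖y‖ ^ 2) := by
    intro i
    have hfirst : (fun z => fderiv ℝ (fun x => φ (‖x‖ ^ 2)) z (EuclideanSpace.single i 1))
        =ᶠ[𝓝 y] fun z => 2 * φ' (‖z‖ ^ 2) * z i := by
      filter_upwards [hnorm_sq.continuousAt.eventually hφ] with z hz
      rw [(hasFDerivAt_comp_norm_sq hz).fderiv]
      simp [EuclideanSpace.inner_single_right, mul_comm]
    have hsecond := (((hasFDerivAt_comp_norm_sq hφ').mul
      (EuclideanSpace.proj (𝕜 := ℝ) i).hasFDerivAt).const_mul 2).congr_of_eventuallyEq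
      (f₁ := fun z => 2 * φ' (‖z‖ ^ 2) * z i) (.of_forall fun z => by simp [mul_assoc])
    rw [hfirst.fderiv_eq, hsecond.fderiv]
    simp only [PiLp.proj_apply, smul_add, add_apply, smul_apply, PiLp.single_eq_same, smul_eq_mul,
      mul_one, coe_innerSL_apply, EuclideanSpace.inner_single_right, Real.ringHom_apply, one_mul]
    ring
  rw [lap, Finset.sum_congr rfl fun i _ => hpartial i, Finset.sum_add_distrib, ← Finset.mul_sum,
    EuclideanSpace.real_norm_sq_eq]
  simp only [Finset.sum_const, Finset.card_univ, Fintype.card_fin, nsmul_eq_mul]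
  ring

end Radial

theorem Real.sq_rpow_div_two {a : ℝ} (ha : 0 ≤ a) (p : ℝ) : (a ^ 2) ^ (p / 2) = a ^ p := by
  rw [← Real.rpow_natCast, ← Real.rpow_mul ha]
  congr 1
  push_cast
  ring

section NormPowers

variable {E : Type*} [NormedAddCommGroup E] [InnerProductSpace ℝ E] {x : E}

theorem contDiffAt_norm_rpow {n : WithTop ℕ∞} (p : ℝ) (hx : x ≠ 0) :
    ContDiffAt ℝ n (fun y : E => ‖y‖ ^ p) x :=
  (Real.contDiffAt_rpow_const_of_ne (norm_ne_zero_iff.2 hx)).comp x (contDiffAt_norm ℝ hx)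

theorem contDiffAt_log_norm {n : WithTop ℕ∞} (hx : x ≠ 0) :
    ContDiffAt ℝ n (fun y : E => Real.log ‖y‖) x :=
  (Real.contDiffAt_log.2 (norm_ne_zero_iff.2 hx)).comp x (contDiffAt_norm ℝ hx)

theorem hasFDerivAt_norm_rpow_of_ne_zero (p : ℝ) (hx : x ≠ 0) :
    HasFDerivAt (fun y : E => ‖y‖ ^ p) ((p * ‖x‖ ^ (p - 2)) • innerSL ℝ x) x := by
  have hx2 : 0 < ‖x‖ ^ 2 := by positivity
  have hφ : HasDerivAt (fun s => s ^ (p / 2)) (p / 2 * (‖x‖ ^ 2) ^ (p / 2 - 1)) (‖x‖ ^ 2) :=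
    Real.hasDerivAt_rpow_const (Or.inl hx2.ne')
  have hcoeff : 2 * (p / 2 * (‖x‖ ^ 2) ^ (p / 2 - 1)) = p * ‖x‖ ^ (p - 2) := by
    rw [show p / 2 - 1 = (p - 2) / 2 by ring, Real.sq_rpow_div_two (norm_nonneg x)]
    ring
  simpa only [Real.sq_rpow_div_two (norm_nonneg _), hcoeff] using hasFDerivAt_comp_norm_sq hφ

end NormPowers

section RadialLaplacians

variable {N : ℕ} {y : EuclideanSpace ℝ (Fin N)}

theorem lap_norm_sq (y : EuclideanSpace ℝ (Fin N)) : lap (fun x => ‖x‖ ^ 2) y = 2 * N := by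
  simpa using lap_comp_norm_sq (y := y) (φ := id) (φ' := fun _ => 1) (φ'' := 0)
    (.of_forall hasDerivAt_id) (hasDerivAt_const _ _)

theorem lap_norm_rpow (p : ℝ) (hy : y ≠ 0) :
    lap (fun x => ‖x‖ ^ p) y = p * (p + N - 2) * ‖y‖ ^ (p - 2) := by
  have hy2 : 0 < ‖y‖ ^ 2 := by positivity
  have hφ : ∀ᶠ s in 𝓝 (‖y‖ ^ 2), HasDerivAt (fun s => s ^ (p / 2)) (p / 2 * s ^ (p / 2 - 1)) s := by
    filter_upwards [lt_mem_nhds hy2] with s hs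
    exact Real.hasDerivAt_rpow_const (Or.inl hs.ne')
  have hφ' : HasDerivAt (fun s => p / 2 * s ^ (p / 2 - 1))
      (p / 2 * ((p / 2 - 1) * (‖y‖ ^ 2) ^ (p / 2 - 1 - 1))) (‖y‖ ^ 2) :=
    (Real.hasDerivAt_rpow_const (Or.inl hy2.ne')).const_mul _
  have h := lap_comp_norm_sq hφ hφ'
  simp only [Real.sq_rpow_div_two (norm_nonneg _)] at h
  rw [h, show p / 2 - 1 = (p - 2) / 2 by ring, Real.sq_rpow_div_two (norm_nonneg _),
    Real.rpow_sub_one hy2.ne', Real.sq_rpow_div_two (norm_nonneg _)]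
  field_simp
  ring

theorem lap_log_norm (hy : y ≠ 0) : lap (fun x => Real.log ‖x‖) y = (N - 2) / ‖y‖ ^ 2 := by
  have hy2 : 0 < ‖y‖ ^ 2 := by positivity
  have hφ : ∀ᶠ s in 𝓝 (‖y‖ ^ 2), HasDerivAt (fun s => Real.log s / 2) (s⁻¹ / 2) s := by
    filter_upwards [lt_mem_nhds hy2] with s hs
    exact (Real.hasDerivAt_log hs.ne').div_const 2
  have hφ' : HasDerivAt (fun s : ℝ => s⁻¹ / 2) (-((‖y‖ ^ 2) ^ 2)⁻¹ / 2) (‖y‖ ^ 2) :=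
    (hasDerivAt_inv hy2.ne').div_const 2
  have hlog : (fun x : EuclideanSpace ℝ (Fin N) => Real.log ‖x‖)
      = fun x => Real.log (‖x‖ ^ 2) / 2 := by
    ext x
    rw [Real.log_pow]
    ring
  rw [hlog, lap_comp_norm_sq hφ hφ']
  field_simp
  ring

end RadialLaplacians

section MaximumPrinciple

variable {N : ℕ} {K O : Set (EuclideanSpace ℝ (Fin N))} {w : EuclideanSpace ℝ (Fin N) → ℝ}

theorem exists_mem_diff_isMaxOn_of_lap_pos (hK : IsCompact K) (hKne : K.Nonempty) (hO : IsOpen O)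
    (hOK : O ⊆ K) (hw : ContinuousOn w K) (hw₂ : ContDiffOn ℝ 2 w O)
    (hlap : ∀ x ∈ O, 0 < lap w x) : ∃ z ∈ K \ O, IsMaxOn w K z := by
  obtain ⟨z, hzK, hzmax⟩ := hK.exists_isMaxOn hKne hw
  refine ⟨z, ⟨hzK, fun hzO => ?_⟩, hzmax⟩
  have hloc : IsLocalMax w z := hzmax.isLocalMax (Filter.mem_of_superset (hO.mem_nhds hzO) hOK)
  exact (hlap z hzO).not_ge
    (lap_nonpos_of_isLocalMax ((hw₂ z hzO).contDiffAt (hO.mem_nhds hzO)) hloc)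

theorem le_of_forall_mem_diff_le_of_lap_nonneg (hN : 0 < N) (hK : IsCompact K) (hO : IsOpen O)
    (hOK : O ⊆ K) (hw : ContinuousOn w K) (hw₂ : ContDiffOn ℝ 2 w O)
    (hlap : ∀ x ∈ O, 0 ≤ lap w x) {m : ℝ} (hm : ∀ z ∈ K \ O, w z ≤ m)
    {x : EuclideanSpace ℝ (Fin N)} (hx : x ∈ K) : w x ≤ m := by
  obtain ⟨B, hB⟩ := hK.isBounded.exists_norm_le
  refine le_of_forall_pos_le_add fun ε hε => ?_
  -- perturb `w` by `δ ‖·‖²` to make it strictly subharmonic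
  set δ := ε / (B ^ 2 + 1)
  have hδ : 0 < δ := by positivity
  have hδB : δ * B ^ 2 ≤ ε := by
    rw [div_mul_eq_mul_div, div_le_iff₀ (by positivity)]
    nlinarith
  set wδ := fun y => w y + δ * ‖y‖ ^ 2
  have hsq : ContDiff ℝ 2 fun y : EuclideanSpace ℝ (Fin N) => δ * ‖y‖ ^ 2 :=
    contDiff_const.mul (contDiff_norm_sq ℝ)
  have hlapδ : ∀ y ∈ O, 0 < lap wδ y := fun y hy => by
    have hwy : ContDiffAt ℝ 2 w y := (hw₂ y hy).contDiffAt (hO.mem_nhds hy)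
    rw [lap_add hwy hsq.contDiffAt, lap_const_mul δ (contDiff_norm_sq ℝ).contDiffAt, lap_norm_sq]
    have hN' : (0 : ℝ) < N := by exact_mod_cast hN
    have hlapy := hlap y hy
    positivity
  obtain ⟨z, hz, hzmax⟩ := exists_mem_diff_isMaxOn_of_lap_pos hK ⟨x, hx⟩ hO hOK
    (hw.add hsq.continuous.continuousOn) (hw₂.add hsq.contDiffOn) hlapδ
  calc w x ≤ wδ x := le_add_of_nonneg_right (by positivity)
    _ ≤ wδ z := hzmax hx
    _ ≤ m + δ * B ^ 2 := by
      have hzB := hB z hz.1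
      exact add_le_add (hm z hz) (by gcongr)
    _ ≤ m + ε := by linarith

end MaximumPrinciple

section Exterior

variable {N : ℕ} {v : EuclideanSpace ℝ (Fin N) → ℝ}

theorem le_of_lap_nonneg_of_le_on_spheres (hN : 0 < N) {r R m : ℝ}
    (hv : ContinuousOn v {x | r ≤ ‖x‖}) (hv₂ : ContDiffOn ℝ 2 v {x | r < ‖x‖})
    (hlap : ∀ x, r < ‖x‖ → 0 ≤ lap v x) (hvr : ∀ x, ‖x‖ = r → v x ≤ m)
    (hvR : ∀ x, ‖x‖ = R → v x ≤ m) {x : EuclideanSpace ℝ (Fin N)} (hrx : r ≤ ‖x‖)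
    (hxR : ‖x‖ ≤ R) : v x ≤ m := by
  refine le_of_forall_mem_diff_le_of_lap_nonneg hN (K := norm ⁻¹' Set.Icc r R)
    (O := norm ⁻¹' Set.Ioo r R) ?_ (isOpen_Ioo.preimage continuous_norm)
    (Set.preimage_mono Set.Ioo_subset_Icc_self) (hv.mono fun y hy => hy.1)
    (hv₂.mono fun y hy => hy.1) (fun y hy => hlap y hy.1) ?_ ⟨hrx, hxR⟩
  · exact (isCompact_closedBall 0 R).of_isClosed_subset (isClosed_Icc.preimage continuous_norm)
      fun y hy => mem_closedBall_zero_iff.2 hy.2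
  · rintro z ⟨⟨hrz, hzR⟩, hzO⟩
    rcases hrz.eq_or_lt with h | h
    · exact hvr z h.symm
    · exact hvR z (hzR.antisymm (not_lt.1 fun h' => hzO ⟨h, h'⟩))

theorem nonpos_of_lap_nonneg_of_tendsto_cobounded (hN : 0 < N)
    (hv : ContinuousOn v {x | 1 ≤ ‖x‖}) (hv₂ : ContDiffOn ℝ 2 v {x | 1 < ‖x‖})
    (hlap : ∀ x, 1 < ‖x‖ → 0 ≤ lap v x) (hv₁ : ∀ x, ‖x‖ = 1 → v x ≤ 0)
    (hlim : Tendsto v (Bornology.cobounded _) (𝓝 0)) {x : EuclideanSpace ℝ (Fin N)}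
    (hx : 1 ≤ ‖x‖) : v x ≤ 0 := by
  refine le_of_forall_pos_le_add fun ε hε => ?_
  obtain ⟨ρ, -, hρ⟩ := hasBasis_cobounded_norm.eventually_iff.1 (hlim.eventually (gt_mem_nhds hε))
  rw [zero_add]
  exact le_of_lap_nonneg_of_le_on_spheres hN hv hv₂ hlap (fun y hy => (hv₁ y hy).trans hε.le)
    (R := max ρ ‖x‖) (fun y hy => (hρ (hy ▸ le_max_left _ _ : ρ ≤ ‖y‖)).le) hx (le_max_right _ _)

end Exterior

theorem ne_zero_of_one_le_norm {E : Type*} [NormedAddCommGroup E] {x : E} (hx : 1 ≤ ‖x‖) :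
    x ≠ 0 :=
  norm_pos_iff.1 (one_pos.trans_le hx)

theorem nonpos_of_lap_nonneg_of_bddAbove {v : EuclideanSpace ℝ (Fin 2) → ℝ}
    (hv : ContinuousOn v {x | 1 ≤ ‖x‖}) (hv₂ : ContDiffOn ℝ 2 v {x | 1 < ‖x‖})
    (hlap : ∀ x, 1 < ‖x‖ → 0 ≤ lap v x) (hv₁ : ∀ x, ‖x‖ = 1 → v x ≤ 0) {M : ℝ}
    (hM : ∀ x, 1 ≤ ‖x‖ → v x ≤ M) {x : EuclideanSpace ℝ (Fin 2)} (hx : 1 ≤ ‖x‖) : v x ≤ 0 := by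
  -- `log ‖·‖` is harmonic in the plane and unbounded: it serves as a barrier
  have hbarrier : ∀ R, max 1 ‖x‖ < R → v x ≤ M / Real.log R * Real.log ‖x‖ := by
    intro R hR
    have hlogR : 0 < Real.log R := Real.log_pos ((le_max_left _ _).trans_lt hR)
    set η := M / Real.log R
    have hlog : ∀ y : EuclideanSpace ℝ (Fin 2), 1 ≤ ‖y‖ →
        ContDiffAt ℝ 2 (fun z => η * Real.log ‖z‖) y := fun y hy =>
      contDiffAt_const.mul (contDiffAt_log_norm (ne_zero_of_one_le_norm hy))
    have hw := le_of_lap_nonneg_of_le_on_spheres (v := fun y => v y - η * Real.log ‖y‖)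
      (m := 0) two_pos
      (hv.sub fun y hy => (hlog y hy).continuousAt.continuousWithinAt)
      (hv₂.sub fun y hy => (hlog y (le_of_lt hy)).contDiffWithinAt)
      (fun y hy => by
        have hvy : ContDiffAt ℝ 2 v y :=
          (hv₂ y hy).contDiffAt ((isOpen_lt continuous_const continuous_norm).mem_nhds hy)
        have hy0 := ne_zero_of_one_le_norm hy.le
        rw [lap_sub hvy (hlog y hy.le), lap_const_mul η (contDiffAt_log_norm hy0),
          lap_log_norm hy0]
        simpa using hlap y hy)
      (fun y hy => by simpa [hy] using hv₁ y hy)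
      (fun y hy => by
        have hvy := hM y (hy ▸ ((le_max_left _ _).trans hR.le))
        simp only [hy, η, div_mul_cancel₀ M hlogR.ne']
        linarith)
      hx ((le_max_right _ _).trans hR.le)
    linarith
  have hlim : Tendsto (fun R => M / Real.log R * Real.log ‖x‖) atTop (𝓝 0) := by
    simpa [div_eq_mul_inv] using
      ((Real.tendsto_log_atTop.inv_tendsto_atTop).const_mul M).mul_const (Real.log ‖x‖)
  exact ge_of_tendsto hlim ((eventually_gt_atTop _).mono hbarrier)

theorem fderiv_eq_of_eqOn_norm_ge {E F : Type*} [NormedAddCommGroup E] [InnerProductSpace ℝ E]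
    [NormedAddCommGroup F] [NormedSpace ℝ F] {f g : E → F} {r : ℝ} {x : E} (hr : 0 < r)
    (hx : ‖x‖ = r) (hf : DifferentiableAt ℝ f x) (hg : DifferentiableAt ℝ g x)
    (hfg : Set.EqOn f g {y | r ≤ ‖y‖}) : fderiv ℝ f x = fderiv ℝ g x := by
  -- the half-space `{y | r² ≤ ⟪x, y⟫}` lies in the region and is a set of unique differentiability
  set H := {y : E | r ^ 2 ≤ innerSL ℝ x y}
  have hH : H ⊆ {y | r ≤ ‖y‖} := fun y (hy : r ^ 2 ≤ inner ℝ x y) => by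
    have := real_inner_le_norm x y
    rw [hx] at this
    exact le_of_mul_le_mul_left (by nlinarith) hr
  have hxH : x ∈ H := by simp [H, hx]
  have hint : (interior H).Nonempty := by
    have hopen : IsOpen {y : E | r ^ 2 < innerSL ℝ x y} :=
      isOpen_lt continuous_const (innerSL ℝ x).continuous
    have hmem : (2 : ℝ) • x ∈ {y : E | r ^ 2 < innerSL ℝ x y} := by
      simp only [Set.mem_ofPred_eq, innerSL_apply_apply, real_inner_smul_right,
        real_inner_self_eq_norm_sq, hx]
      nlinarith
    have hsub : {y : E | r ^ 2 < innerSL ℝ x y} ⊆ H := fun y (hy : r ^ 2 < _) => hy.le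
    exact ⟨_, hopen.subset_interior_iff.2 hsub hmem⟩
  have huniq : UniqueDiffWithinAt ℝ H x :=
    uniqueDiffWithinAt_convex (convex_halfSpace_ge (innerSL ℝ x).toLinearMap.isLinear _) hint
      (subset_closure hxH)
  exact huniq.eq hf.hasFDerivAt.hasFDerivWithinAt
    (hg.hasFDerivAt.hasFDerivWithinAt.congr (fun y hy => hfg (hH hy)) (hfg (hH hxH)))

section ExteriorProblem

variable {N : ℕ}

def ConditionAtInfinity (u : EuclideanSpace ℝ (Fin N) → ℝ) : Prop :=
  (3 ≤ N → Tendsto u (Bornology.cobounded _) (𝓝 0)) ∧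
    (N = 2 → ∃ C, ∀ x : EuclideanSpace ℝ (Fin N), 1 ≤ ‖x‖ → |u x| ≤ C)

variable {u₁ u₂ : EuclideanSpace ℝ (Fin N) → ℝ}

theorem le_of_lap_le_of_conditionAtInfinity (hN : 2 ≤ N)
    (hu₁ : ContinuousOn u₁ {x | 1 ≤ ‖x‖}) (hu₁' : ContDiffOn ℝ 2 u₁ {x | 1 < ‖x‖})
    (hu₂ : ContinuousOn u₂ {x | 1 ≤ ‖x‖}) (hu₂' : ContDiffOn ℝ 2 u₂ {x | 1 < ‖x‖})
    (hlap : ∀ x, 1 < ‖x‖ → lap u₂ x ≤ lap u₁ x) (hbd : ∀ x, ‖x‖ = 1 → u₁ x ≤ u₂ x)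
    (h₁ : ConditionAtInfinity u₁) (h₂ : ConditionAtInfinity u₂) {x : EuclideanSpace ℝ (Fin N)}
    (hx : 1 ≤ ‖x‖) : u₁ x ≤ u₂ x := by
  have hopen : IsOpen {x : EuclideanSpace ℝ (Fin N) | 1 < ‖x‖} :=
    isOpen_lt continuous_const continuous_norm
  have hlap' : ∀ y, 1 < ‖y‖ → 0 ≤ lap (fun z => u₁ z - u₂ z) y := fun y hy => by
    rw [lap_sub ((hu₁' y hy).contDiffAt (hopen.mem_nhds hy))
      ((hu₂' y hy).contDiffAt (hopen.mem_nhds hy))]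
    exact sub_nonneg.2 (hlap y hy)
  have hbd' : ∀ y, ‖y‖ = 1 → u₁ y - u₂ y ≤ 0 := fun y hy => sub_nonpos.2 (hbd y hy)
  rw [← sub_nonpos]
  rcases hN.eq_or_lt with rfl | hN
  · obtain ⟨C₁, hC₁⟩ := h₁.2 rfl
    obtain ⟨C₂, hC₂⟩ := h₂.2 rfl
    refine nonpos_of_lap_nonneg_of_bddAbove (v := fun z => u₁ z - u₂ z) (hu₁.sub hu₂)
      (hu₁'.sub hu₂') hlap' hbd' (M := C₁ + C₂) (fun y hy => ?_) hx
    linarith [le_abs_self (u₁ y), neg_abs_le (u₂ y), hC₁ y hy, hC₂ y hy]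
  · exact nonpos_of_lap_nonneg_of_tendsto_cobounded (v := fun z => u₁ z - u₂ z) (by omega)
      (hu₁.sub hu₂) (hu₁'.sub hu₂') hlap' hbd' (by simpa using (h₁.1 hN).sub (h₂.1 hN)) hx

theorem eqOn_of_lap_eq_of_conditionAtInfinity (hN : 2 ≤ N)
    (hu₁ : ContinuousOn u₁ {x | 1 ≤ ‖x‖}) (hu₁' : ContDiffOn ℝ 2 u₁ {x | 1 < ‖x‖})
    (hu₂ : ContinuousOn u₂ {x | 1 ≤ ‖x‖}) (hu₂' : ContDiffOn ℝ 2 u₂ {x | 1 < ‖x‖})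
    (hlap : ∀ x, 1 < ‖x‖ → lap u₁ x = lap u₂ x) (hbd : ∀ x, ‖x‖ = 1 → u₁ x = u₂ x)
    (h₁ : ConditionAtInfinity u₁) (h₂ : ConditionAtInfinity u₂) :
    Set.EqOn u₁ u₂ {x | 1 ≤ ‖x‖} := fun _ hx =>
  le_antisymm
    (le_of_lap_le_of_conditionAtInfinity hN hu₁ hu₁' hu₂ hu₂' (fun y hy => (hlap y hy).ge)
      (fun y hy => (hbd y hy).le) h₁ h₂ hx)
    (le_of_lap_le_of_conditionAtInfinity hN hu₂ hu₂' hu₁ hu₁' (fun y hy => (hlap y hy).le)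
      (fun y hy => (hbd y hy).ge) h₂ h₁ hx)

end ExteriorProblem

noncomputable def exteriorSolution (N : ℕ) (x : EuclideanSpace ℝ (Fin N)) : ℝ :=
  (‖x‖ ^ (-(N : ℝ)) - ‖x‖ ^ ((2 : ℝ) - N)) / 2

section ExteriorSolution

variable {N : ℕ} {x : EuclideanSpace ℝ (Fin N)}

theorem contDiffAt_exteriorSolution (hx : x ≠ 0) : ContDiffAt ℝ 2 (exteriorSolution N) x :=
  ((contDiffAt_norm_rpow _ hx).sub (contDiffAt_norm_rpow _ hx)).div_const 2

theorem exteriorSolution_eq_inv_two_mul :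
    exteriorSolution N = fun y => 2⁻¹ * (‖y‖ ^ (-(N : ℝ)) - ‖y‖ ^ ((2 : ℝ) - N)) := by
  ext y
  rw [exteriorSolution, div_eq_inv_mul]

theorem lap_exteriorSolution (hx : x ≠ 0) :
    lap (exteriorSolution N) x = N * ‖x‖ ^ (-(N : ℝ) - 2) := by
  rw [exteriorSolution_eq_inv_two_mul,
    lap_const_mul _ ((contDiffAt_norm_rpow _ hx).sub (contDiffAt_norm_rpow _ hx)),
    lap_sub (contDiffAt_norm_rpow _ hx) (contDiffAt_norm_rpow _ hx), lap_norm_rpow _ hx,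
    lap_norm_rpow _ hx]
  ring

theorem exteriorSolution_of_norm_eq_one (hx : ‖x‖ = 1) : exteriorSolution N x = 0 := by
  simp [exteriorSolution, hx]

theorem hasFDerivAt_exteriorSolution_of_norm_eq_one (hx : ‖x‖ = 1) :
    HasFDerivAt (exteriorSolution N) (-innerSL ℝ x) x := by
  have hx0 : x ≠ 0 := norm_ne_zero_iff.1 (by simp [hx])
  rw [exteriorSolution_eq_inv_two_mul]
  refine (((hasFDerivAt_norm_rpow_of_ne_zero _ hx0).sub
    (hasFDerivAt_norm_rpow_of_ne_zero _ hx0)).const_mul 2⁻¹).congr_fderiv ?_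
  ext y
  simp only [hx, Real.one_rpow, mul_one, neg_smul, sub_sub_cancel_left, Real.rpow_neg_natCast,
    zpow_neg, zpow_natCast, one_pow, inv_one, smul_apply, sub_apply, neg_apply, coe_innerSL_apply,
    smul_eq_mul]
  ring

theorem conditionAtInfinity_exteriorSolution (hN : 2 ≤ N) :
    ConditionAtInfinity (exteriorSolution N) := by
  refine ⟨fun hN₃ => ?_, fun _ => ⟨1, fun x hx => ?_⟩⟩
  · have hN₀ : (0 : ℝ) < N := by positivity
    have hN₂ : (0 : ℝ) < N - 2 := by
      have : (3 : ℝ) ≤ N := by exact_mod_cast hN₃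
      linarith
    have hlim := ((tendsto_rpow_neg_atTop hN₀).sub (tendsto_rpow_neg_atTop hN₂)).div_const 2
    rw [neg_sub, sub_self, zero_div] at hlim
    exact hlim.comp tendsto_norm_cobounded_atTop
  · have hN' : (2 : ℝ) - N ≤ 0 := by
      have : (2 : ℝ) ≤ N := by exact_mod_cast hN
      linarith
    have h₁ := Real.rpow_le_one_of_one_le_of_nonpos hx (neg_nonpos.2 (Nat.cast_nonneg N))
    have h₂ := Real.rpow_le_one_of_one_le_of_nonpos hx hN'
    have h₃ := Real.rpow_nonneg (norm_nonneg x) (-(N : ℝ))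
    have h₄ := Real.rpow_nonneg (norm_nonneg x) ((2 : ℝ) - N)
    rw [exteriorSolution, abs_le]
    constructor <;> linarith

end ExteriorSolution

theorem stmt_18_general {N : ℕ} (hN : 2 ≤ N)
    (u : EuclideanSpace ℝ (Fin N) → ℝ)
    -- u is C² on a neighborhood of the closed exterior region {|x| ≥ 1}
    (V : Set (EuclideanSpace ℝ (Fin N))) (hVo : IsOpen V)
    (hV : {x : EuclideanSpace ℝ (Fin N) | 1 ≤ ‖x‖} ⊆ V) (hu : ContDiffOn ℝ 2 u V)
    (c : ℝ)
    (hEq : ∀ x : EuclideanSpace ℝ (Fin N), 1 < ‖x‖ → lap u x = N * ‖x‖ ^ (-(N : ℝ) - 2))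
    (hbd0 : ∀ x : EuclideanSpace ℝ (Fin N), ‖x‖ = 1 → u x = 0)
    (hbd1 : ∀ x : EuclideanSpace ℝ (Fin N), ‖x‖ = 1 →
      ‖gradient u x‖ = c * ‖x‖ ^ (-(N : ℝ)))
    (hdecay3 : 3 ≤ N →
      Tendsto u (Bornology.cobounded (EuclideanSpace ℝ (Fin N))) (nhds 0))
    (hdecay2 : N = 2 →
      ∃ C : ℝ, ∀ x : EuclideanSpace ℝ (Fin N), 1 ≤ ‖x‖ → |u x| ≤ C) :
    c = 1 ∧
    ∀ x : EuclideanSpace ℝ (Fin N), 1 ≤ ‖x‖ →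
      u x = (‖x‖ ^ (-(N : ℝ)) - ‖x‖ ^ ((2 : ℝ) - N)) / 2 := by
  have hU : ContDiffOn ℝ 2 (exteriorSolution N) {x | 1 ≤ ‖x‖} := fun x hx =>
    (contDiffAt_exteriorSolution (ne_zero_of_one_le_norm hx)).contDiffWithinAt
  have hsol : Set.EqOn u (exteriorSolution N) {x | 1 ≤ ‖x‖} :=
    eqOn_of_lap_eq_of_conditionAtInfinity hN (hu.continuousOn.mono hV)
      (hu.mono fun x (hx : 1 < ‖x‖) => hV hx.le) hU.continuousOn
      (hU.mono fun x (hx : 1 < ‖x‖) => hx.le)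
      (fun x hx => by rw [hEq x hx, lap_exteriorSolution (ne_zero_of_one_le_norm hx.le)])
      (fun x hx => by rw [hbd0 x hx, exteriorSolution_of_norm_eq_one hx])
      ⟨hdecay3, hdecay2⟩ (conditionAtInfinity_exteriorSolution hN)
  refine ⟨?_, fun x hx => hsol hx⟩
  set x₁ : EuclideanSpace ℝ (Fin N) := EuclideanSpace.single ⟨0, by omega⟩ 1
  have hx₁ : ‖x₁‖ = 1 := by simp [x₁]
  have hu₁ : DifferentiableAt ℝ u x₁ :=
    ((hu x₁ (hV hx₁.ge)).differentiableWithinAt (by norm_num)).differentiableAt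
      (hVo.mem_nhds (hV hx₁.ge))
  have hU₁ := hasFDerivAt_exteriorSolution_of_norm_eq_one hx₁
  have hfderiv : fderiv ℝ u x₁ = -innerSL ℝ x₁ := by
    rw [fderiv_eq_of_eqOn_norm_ge one_pos hx₁ hu₁ hU₁.differentiableAt hsol, hU₁.fderiv]
  have hgrad : ‖gradient u x₁‖ = 1 := by
    rw [← LinearIsometryEquiv.norm_map (InnerProductSpace.toDual ℝ _), toDual_gradient,
      hfderiv, norm_neg, innerSL_apply_norm, hx₁]
  simpa [hgrad, hx₁] using (hbd1 x₁ hx₁).symm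

theorem stmt_18 {N : ℕ} (hN : 2 ≤ N)
    (u : EuclideanSpace ℝ (Fin N) → ℝ)
    -- u is C² on a neighborhood of the closed exterior region {|x| ≥ 1}
    (V : Set (EuclideanSpace ℝ (Fin N))) (hVo : IsOpen V)
    (hV : {x : EuclideanSpace ℝ (Fin N) | 1 ≤ ‖x‖} ⊆ V) (hu : ContDiffOn ℝ 2 u V)
    (c : ℝ) (hc : 0 < c)
    (hEq : ∀ x : EuclideanSpace ℝ (Fin N), 1 < ‖x‖ → lap u x = N * ‖x‖ ^ (-(N : ℝ) - 2))
    (hbd0 : ∀ x : EuclideanSpace ℝ (Fin N), ‖x‖ = 1 → u x = 0)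
    (hbd1 : ∀ x : EuclideanSpace ℝ (Fin N), ‖x‖ = 1 →
      ‖gradient u x‖ = c * ‖x‖ ^ (-(N : ℝ)))
    (hdecay3 : 3 ≤ N →
      Tendsto u (Bornology.cobounded (EuclideanSpace ℝ (Fin N))) (nhds 0))
    (hdecay2 : N = 2 →
      ∃ C : ℝ, ∀ x : EuclideanSpace ℝ (Fin N), 1 ≤ ‖x‖ → |u x| ≤ C) :
    c = 1 ∧
    ∀ x : EuclideanSpace ℝ (Fin N), 1 ≤ ‖x‖ →
      u x = (‖x‖ ^ (-(N : ℝ)) - ‖x‖ ^ ((2 : ℝ) - N)) / 2 :=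
  stmt_18_general hN u V hVo hV hu c hEq hbd0 hbd1 hdecay3 hdecay2
end
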